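/- If s_1, s_2, s_3 ∈ K[x_1,x_2,x_3] are symmetric polynomials with L(s_1)·f_{0,1,0} + L(s_2)·f_{0,2,0} + L(s_3)·f_{1,2,0} = 0 in F_3, then s_1 = s_2 = s_3 = 0. That is, f_{0,1,0}, f_{0,2,0}, f_{1,2,0} are free generators of the S_3-invariants of F_3' as a left module over the symmetric polynomials K[x_1,x_2,x_3]^{S_3}. -/
import Mathlib


/-- The Grassmann relation on the free algebra on three generators. -/
def GrassRel3 (K : Type*) [Field K] (x y : FreeAlgebra K (Fin 3)) : Prop :=
  ∃ a b c : FreeAlgebra K (Fin 3), x = (a * b - b * a) * c - c * (a * b - b * a) ∧ y = 0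

/-- The relatively free algebra of rank 3 in the variety generated by Grassmann algebras. -/
abbrev F3 (K : Type*) [Field K] := RingQuot (GrassRel3 K)

/-- The generators of `F3`. -/
noncomputable def X3 (K : Type*) [Field K] (i : Fin 3) : F3 K :=
  RingQuot.mkAlgHom K (GrassRel3 K) (FreeAlgebra.ι K i)

/-- The `K`-linear substitution map `K[x₁,x₂,x₃] → F3` sending each monomial
`x₁^a x₂^b x₃^c` to the ordered product `x₁^a x₂^b x₃^c` in `F3`. -/
noncomputable def L3 (K : Type*) [Field K] (p : MvPolynomial (Fin 3) K) : F3 K :=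
  p.support.sum fun m =>
    p.coeff m • (X3 K 0 ^ m 0 * X3 K 1 ^ m 1 * X3 K 2 ^ m 2)

/-- The elements `f_{a,b,c}` of `F3`. -/
noncomputable def fgen (K : Type*) [Field K] (a b c : ℕ) : F3 K :=
  (X3 K 0 ^ a * X3 K 1 ^ b - X3 K 0 ^ b * X3 K 1 ^ a) * X3 K 2 ^ c *
      (X3 K 1 * X3 K 0 - X3 K 0 * X3 K 1)
    + (X3 K 0 ^ a * X3 K 2 ^ b - X3 K 0 ^ b * X3 K 2 ^ a) * X3 K 1 ^ c *
      (X3 K 2 * X3 K 0 - X3 K 0 * X3 K 2)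
    + (X3 K 1 ^ a * X3 K 2 ^ b - X3 K 1 ^ b * X3 K 2 ^ a) * X3 K 0 ^ c *
      (X3 K 2 * X3 K 1 - X3 K 1 * X3 K 2)

section Aux

variable (K : Type*) [Field K]

/-- Left regular representation pattern of the rank-2 truncated Grassmann algebra
over `K[x₁,x₂,x₃]`, encoding `p + q ε₁ + r ε₂ + s ε₁ε₂`. -/
noncomputable def Tm (p q r s : MvPolynomial (Fin 3) K) :
    Matrix (Fin 4) (Fin 4) (MvPolynomial (Fin 3) K) :=
  !![p,0,0,0; q,p,0,0; r,0,p,0; s,r,-q,p]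

lemma Tm_congr {p q r s p' q' r' s' : MvPolynomial (Fin 3) K}
    (h1 : p = p') (h2 : q = q') (h3 : r = r') (h4 : s = s') :
    Tm K p q r s = Tm K p' q' r' s' := by
  subst h1; subst h2; subst h3; subst h4; rfl

set_option maxHeartbeats 1000000 in
lemma Tm_mul (p q r s p' q' r' s' : MvPolynomial (Fin 3) K) :
    Tm K p q r s * Tm K p' q' r' s' =
      Tm K (p*p') (p*q'+q*p') (p*r'+r*p') (p*s'+s*p'+r*q'-q*r') := by
  ext i j : 1
  fin_cases i <;> fin_cases j <;>
    simp [Tm, Matrix.mul_apply, Fin.sum_univ_four, Matrix.vecHead, Matrix.vecTail] <;> ring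

lemma Tm_add (p q r s p' q' r' s' : MvPolynomial (Fin 3) K) :
    Tm K p q r s + Tm K p' q' r' s' = Tm K (p+p') (q+q') (r+r') (s+s') := by
  ext i j : 1
  fin_cases i <;> fin_cases j <;> simp [Tm, Matrix.vecHead, Matrix.vecTail] <;> ring

lemma Tm_sub (p q r s p' q' r' s' : MvPolynomial (Fin 3) K) :
    Tm K p q r s - Tm K p' q' r' s' = Tm K (p-p') (q-q') (r-r') (s-s') := by
  ext i j : 1
  fin_cases i <;> fin_cases j <;> simp [Tm, Matrix.vecHead, Matrix.vecTail] <;> ring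

lemma Tm_zero : Tm K 0 0 0 0 = 0 := by
  ext i j : 1
  fin_cases i <;> fin_cases j <;> simp [Tm, Matrix.vecHead, Matrix.vecTail]

lemma Tm_entry (p q r s : MvPolynomial (Fin 3) K) : Tm K p q r s 3 0 = s := by
  simp [Tm]

lemma Tm_algebraMap (k : K) :
    algebraMap K (Matrix (Fin 4) (Fin 4) (MvPolynomial (Fin 3) K)) k =
      Tm K (MvPolynomial.C k) 0 0 0 := by
  ext i j : 1
  fin_cases i <;> fin_cases j <;>
    simp [Tm, Matrix.algebraMap_matrix_apply, MvPolynomial.algebraMap_eq,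
      Matrix.vecHead, Matrix.vecTail]

/-- Images of the generators. -/
noncomputable def Mgen : Fin 3 → Matrix (Fin 4) (Fin 4) (MvPolynomial (Fin 3) K) :=
  ![Tm K (MvPolynomial.X 0) 1 0 0, Tm K (MvPolynomial.X 1) 0 1 0,
    Tm K (MvPolynomial.X 2) 0 0 0]

noncomputable def f0 : FreeAlgebra K (Fin 3) →ₐ[K]
    Matrix (Fin 4) (Fin 4) (MvPolynomial (Fin 3) K) :=
  FreeAlgebra.lift K (Mgen K)

noncomputable def g0 : FreeAlgebra K (Fin 3) →ₐ[K] MvPolynomial (Fin 3) K :=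
  FreeAlgebra.lift K MvPolynomial.X

lemma f0_form (y : FreeAlgebra K (Fin 3)) :
    ∃ q r s, f0 K y = Tm K (g0 K y) q r s := by
  induction y with
  | grade0 k =>
      exact ⟨0, 0, 0, by
        simp [f0, g0, Tm_algebraMap, MvPolynomial.algebraMap_eq]⟩
  | grade1 i =>
      fin_cases i
      · exact ⟨1, 0, 0, by simp [f0, g0, Mgen]⟩
      · exact ⟨0, 1, 0, by simp [f0, g0, Mgen]⟩
      · exact ⟨0, 0, 0, by simp [f0, g0, Mgen]⟩
  | mul a b ha hb =>
      obtain ⟨qa, ra, sa, ha⟩ := ha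
      obtain ⟨qb, rb, sb, hb⟩ := hb
      exact ⟨_, _, _, by rw [map_mul, map_mul, ha, hb, Tm_mul]⟩
  | add a b ha hb =>
      obtain ⟨qa, ra, sa, ha⟩ := ha
      obtain ⟨qb, rb, sb, hb⟩ := hb
      exact ⟨_, _, _, by rw [map_add, map_add, ha, hb, Tm_add]⟩

lemma f0_rel : ∀ ⦃x y⦄, GrassRel3 K x y → f0 K x = f0 K y := by
  rintro x y ⟨a, b, c, rfl, rfl⟩
  obtain ⟨qa, ra, sa, ha⟩ := f0_form K a
  obtain ⟨qb, rb, sb, hb⟩ := f0_form K b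
  obtain ⟨qc, rc, sc, hc⟩ := f0_form K c
  simp only [map_sub, map_mul, map_zero, ha, hb, hc, Tm_mul, Tm_sub]
  rw [← Tm_zero K]
  exact Tm_congr K (by ring) (by ring) (by ring) (by ring)

lemma g0_rel : ∀ ⦃x y⦄, GrassRel3 K x y → g0 K x = g0 K y := by
  rintro x y ⟨a, b, c, rfl, rfl⟩
  simp only [map_sub, map_mul, map_zero]
  ring

noncomputable def Phi : F3 K →ₐ[K] Matrix (Fin 4) (Fin 4) (MvPolynomial (Fin 3) K) :=
  RingQuot.liftAlgHom K ⟨f0 K, f0_rel K⟩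

noncomputable def Psi : F3 K →ₐ[K] MvPolynomial (Fin 3) K :=
  RingQuot.liftAlgHom K ⟨g0 K, g0_rel K⟩

lemma Phi_X3 (i : Fin 3) : Phi K (X3 K i) = Mgen K i := by
  simp [Phi, X3, f0]

lemma Psi_X3 (i : Fin 3) : Psi K (X3 K i) = MvPolynomial.X i := by
  simp [Psi, X3, g0]

lemma Phi_form (x : F3 K) : ∃ q r s, Phi K x = Tm K (Psi K x) q r s := by
  obtain ⟨y, rfl⟩ := RingQuot.mkAlgHom_surjective K (GrassRel3 K) x
  obtain ⟨q, r, s, h⟩ := f0_form K y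
  refine ⟨q, r, s, ?_⟩
  simpa [Phi, Psi] using h

lemma Phi_mul_omega (x : F3 K) (e : MvPolynomial (Fin 3) K) :
    Phi K x * Tm K 0 0 0 e = Tm K 0 0 0 (Psi K x * e) := by
  obtain ⟨q, r, s, h⟩ := Phi_form K x
  rw [h, Tm_mul]
  exact Tm_congr K (by ring) (by ring) (by ring) (by ring)

lemma Phi_fgen (a b c : ℕ) :
    Phi K (fgen K a b c) =
      Tm K 0 0 0
        ((MvPolynomial.X 0 ^ a * MvPolynomial.X 1 ^ b
            - MvPolynomial.X 0 ^ b * MvPolynomial.X 1 ^ a) * MvPolynomial.X 2 ^ c * 2) := by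
  have c21 : Phi K (X3 K 1 * X3 K 0 - X3 K 0 * X3 K 1) = Tm K 0 0 0 2 := by
    simp only [map_sub, map_mul, Phi_X3, Mgen, Matrix.cons_val_zero, Matrix.cons_val_one,
      Matrix.head_cons, Tm_mul, Tm_sub]
    exact Tm_congr K (by ring) (by ring) (by ring) (by ring)
  have c31 : Phi K (X3 K 2 * X3 K 0 - X3 K 0 * X3 K 2) = 0 := by
    simp only [map_sub, map_mul, Phi_X3, Mgen, Matrix.cons_val_zero, Matrix.cons_val_one,
      Matrix.head_cons, Matrix.cons_val_two, Matrix.tail_cons, Tm_mul, Tm_sub]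
    rw [← Tm_zero K]
    exact Tm_congr K (by ring) (by ring) (by ring) (by ring)
  have c32 : Phi K (X3 K 2 * X3 K 1 - X3 K 1 * X3 K 2) = 0 := by
    simp only [map_sub, map_mul, Phi_X3, Mgen, Matrix.cons_val_zero, Matrix.cons_val_one,
      Matrix.head_cons, Matrix.cons_val_two, Matrix.tail_cons, Tm_mul, Tm_sub]
    rw [← Tm_zero K]
    exact Tm_congr K (by ring) (by ring) (by ring) (by ring)
  have hu : Psi K ((X3 K 0 ^ a * X3 K 1 ^ b - X3 K 0 ^ b * X3 K 1 ^ a) * X3 K 2 ^ c) =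
      (MvPolynomial.X 0 ^ a * MvPolynomial.X 1 ^ b
        - MvPolynomial.X 0 ^ b * MvPolynomial.X 1 ^ a) * MvPolynomial.X 2 ^ c := by
    simp [Psi_X3]
  have t1 : Phi K ((X3 K 0 ^ a * X3 K 1 ^ b - X3 K 0 ^ b * X3 K 1 ^ a) * X3 K 2 ^ c *
      (X3 K 1 * X3 K 0 - X3 K 0 * X3 K 1)) =
      Tm K 0 0 0
        ((MvPolynomial.X 0 ^ a * MvPolynomial.X 1 ^ b
            - MvPolynomial.X 0 ^ b * MvPolynomial.X 1 ^ a) * MvPolynomial.X 2 ^ c * 2) := by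
    rw [map_mul, c21, Phi_mul_omega, hu]
  have t2 : Phi K ((X3 K 0 ^ a * X3 K 2 ^ b - X3 K 0 ^ b * X3 K 2 ^ a) * X3 K 1 ^ c *
      (X3 K 2 * X3 K 0 - X3 K 0 * X3 K 2)) = 0 := by
    rw [map_mul, c31, mul_zero]
  have t3 : Phi K ((X3 K 1 ^ a * X3 K 2 ^ b - X3 K 1 ^ b * X3 K 2 ^ a) * X3 K 0 ^ c *
      (X3 K 2 * X3 K 1 - X3 K 1 * X3 K 2)) = 0 := by
    rw [map_mul, c32, mul_zero]
  rw [fgen, map_add, map_add, t1, t2, t3, add_zero, add_zero]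

lemma Psi_L3 (s : MvPolynomial (Fin 3) K) : Psi K (L3 K s) = s := by
  rw [L3, map_sum]
  conv_rhs => rw [MvPolynomial.as_sum s]
  refine Finset.sum_congr rfl fun m _ => ?_
  rw [map_smul, map_mul, map_mul, map_pow, map_pow, map_pow, Psi_X3, Psi_X3, Psi_X3,
    MvPolynomial.monomial_eq, Finsupp.prod_pow, Fin.prod_univ_three,
    MvPolynomial.smul_eq_C_mul]

end Aux

/-- `f_{0,1,0}, f_{0,2,0}, f_{1,2,0}` are free generators: if `s₁, s₂, s₃` are symmetric
polynomials with `L(s₁)·f_{0,1,0} + L(s₂)·f_{0,2,0} + L(s₃)·f_{1,2,0} = 0` in `F3`,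
then `s₁ = s₂ = s₃ = 0`. -/
theorem symm_commIdeal3_free_generators (K : Type*) [Field K] [CharZero K]
    (s₁ s₂ s₃ : MvPolynomial (Fin 3) K)
    (h₁ : s₁.IsSymmetric) (h₂ : s₂.IsSymmetric) (h₃ : s₃.IsSymmetric)
    (h : L3 K s₁ * fgen K 0 1 0 + L3 K s₂ * fgen K 0 2 0 + L3 K s₃ * fgen K 1 2 0 = 0) :
    s₁ = 0 ∧ s₂ = 0 ∧ s₃ = 0 := by
  have H := congrArg (Phi K) h
  rw [map_add, map_add, map_mul, map_mul, map_mul, map_zero, Phi_fgen, Phi_fgen, Phi_fgen,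
    Phi_mul_omega, Phi_mul_omega, Phi_mul_omega, Psi_L3, Psi_L3, Psi_L3, Tm_add, Tm_add] at H
  have H0 := congrArg (fun M => M 3 0) H
  simp only [Tm_entry, Matrix.zero_apply] at H0
  -- H0 is a polynomial identity in `R`
  have hX01 : (MvPolynomial.X 1 - MvPolynomial.X 0 : MvPolynomial (Fin 3) K) ≠ 0 :=
    sub_ne_zero.mpr (MvPolynomial.X_injective.ne (by decide))
  have hX02 : (MvPolynomial.X 0 - MvPolynomial.X 2 : MvPolynomial (Fin 3) K) ≠ 0 :=
    sub_ne_zero.mpr (MvPolynomial.X_injective.ne (by decide))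
  have hX12 : (MvPolynomial.X 1 - MvPolynomial.X 2 : MvPolynomial (Fin 3) K) ≠ 0 :=
    sub_ne_zero.mpr (MvPolynomial.X_injective.ne (by decide))
  have h2 : (2 : MvPolynomial (Fin 3) K) ≠ 0 := two_ne_zero
  have hE : s₁ + (MvPolynomial.X 0 + MvPolynomial.X 1) * s₂
      + MvPolynomial.X 0 * MvPolynomial.X 1 * s₃ = 0 := by
    have hfac : ((2 : MvPolynomial (Fin 3) K) * (MvPolynomial.X 1 - MvPolynomial.X 0)) *
        (s₁ + (MvPolynomial.X 0 + MvPolynomial.X 1) * s₂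
          + MvPolynomial.X 0 * MvPolynomial.X 1 * s₃) = 0 := by
      linear_combination H0
    rcases mul_eq_zero.mp hfac with h' | h'
    · exact absurd h' (mul_ne_zero h2 hX01)
    · exact h'
  have hE2 : s₁ + (MvPolynomial.X 2 + MvPolynomial.X 1) * s₂
      + MvPolynomial.X 2 * MvPolynomial.X 1 * s₃ = 0 := by
    have := congrArg (MvPolynomial.rename (Equiv.swap (0 : Fin 3) 2)) hE
    simpa [map_add, map_mul, MvPolynomial.rename_X, Equiv.swap_apply_def,
      h₁ (Equiv.swap (0 : Fin 3) 2), h₂ (Equiv.swap (0 : Fin 3) 2),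
      h₃ (Equiv.swap (0 : Fin 3) 2)] using this
  have hF : s₂ + MvPolynomial.X 1 * s₃ = 0 := by
    have hfac : (MvPolynomial.X 0 - MvPolynomial.X 2 : MvPolynomial (Fin 3) K) *
        (s₂ + MvPolynomial.X 1 * s₃) = 0 := by
      linear_combination hE - hE2
    rcases mul_eq_zero.mp hfac with h' | h'
    · exact absurd h' hX02
    · exact h'
  have hF2 : s₂ + MvPolynomial.X 2 * s₃ = 0 := by
    have := congrArg (MvPolynomial.rename (Equiv.swap (1 : Fin 3) 2)) hF
    simpa [map_add, map_mul, MvPolynomial.rename_X, Equiv.swap_apply_def,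
      h₂ (Equiv.swap (1 : Fin 3) 2), h₃ (Equiv.swap (1 : Fin 3) 2)] using this
  have hs3 : s₃ = 0 := by
    have hfac : (MvPolynomial.X 1 - MvPolynomial.X 2 : MvPolynomial (Fin 3) K) * s₃ = 0 := by
      linear_combination hF - hF2
    rcases mul_eq_zero.mp hfac with h' | h'
    · exact absurd h' hX12
    · exact h'
  have hs2 : s₂ = 0 := by linear_combination hF - MvPolynomial.X 1 * hs3
  have hs1 : s₁ = 0 := by
    linear_combination hE - (MvPolynomial.X 0 + MvPolynomial.X 1) * hs2
      - MvPolynomial.X 0 * MvPolynomial.X 1 * hs3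
  exact ⟨hs1, hs2, hs3⟩
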